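/- Let u, r₁ : ℝ³ → ℝ be smooth (C^∞) functions of (t,x,y). Suppose u satisfies the 3D rdDym equation u_ty = u_x·u_xy − u_y·u_xx and r₁ satisfies the covering equations r₁,x = u_x² − u_t and r₁,y = u_x·u_y at every point. Then the function v = 3·r₁ + x·u_t − 2·u·u_x satisfies the linearized equation v_ty − u_x·v_xy + u_y·v_xx − u_xy·v_x + u_xx·v_y = 0 everywhere (i.e., v is a nonlocal shadow in the negative covering). -/

import Mathlib

noncomputable section

/-- Partial derivative with respect to the first coordinate `t`. -/
def pt (u : ℝ × ℝ × ℝ → ℝ) : ℝ × ℝ × ℝ → ℝ :=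
  fun p => deriv (fun s => u (s, p.2.1, p.2.2)) p.1

/-- Partial derivative with respect to the second coordinate `x`. -/
def px (u : ℝ × ℝ × ℝ → ℝ) : ℝ × ℝ × ℝ → ℝ :=
  fun p => deriv (fun s => u (p.1, s, p.2.2)) p.2.1

/-- Partial derivative with respect to the third coordinate `y`. -/
def py (u : ℝ × ℝ × ℝ → ℝ) : ℝ × ℝ × ℝ → ℝ :=
  fun p => deriv (fun s => u (p.1, p.2.1, s)) p.2.2

/-- The 3D rdDym equation `u_ty = u_x·u_xy − u_y·u_xx`. -/
def rdDym (u : ℝ × ℝ × ℝ → ℝ) : Prop :=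
  ∀ p, py (pt u) p = px u p * py (px u) p - py u p * px (px u) p

/-- The linearization `ℓ(v) = v_ty − u_x·v_xy + u_y·v_xx − u_xy·v_x + u_xx·v_y = 0`
of the rdDym equation along `u`. -/
def linearized (u v : ℝ × ℝ × ℝ → ℝ) : Prop :=
  ∀ p, py (pt v) p - px u p * py (px v) p + py u p * px (px v) p
      - py (px u) p * px v p + px (px u) p * py v p = 0

/-! ### Auxiliary directional-derivative calculus -/

/-- Directional derivative of `f` in direction `a`. -/
def Dv (a : ℝ × ℝ × ℝ) (f : ℝ × ℝ × ℝ → ℝ) : ℝ × ℝ × ℝ → ℝ :=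
  fun p => fderiv ℝ f p a

lemma Dv_contDiff {f : ℝ × ℝ × ℝ → ℝ} (hf : ContDiff ℝ (⊤ : ℕ∞) f) (a : ℝ × ℝ × ℝ) :
    ContDiff ℝ (⊤ : ℕ∞) (Dv a f) := by
  have h : ContDiff ℝ (⊤ : ℕ∞) (fderiv ℝ f) := hf.fderiv_right (by simp)
  exact (ContinuousLinearMap.apply ℝ ℝ a).contDiff.comp h

lemma Dv_comm {f : ℝ × ℝ × ℝ → ℝ} (hf : ContDiff ℝ (⊤ : ℕ∞) f) (a b : ℝ × ℝ × ℝ) :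
    Dv a (Dv b f) = Dv b (Dv a f) := by
  funext p
  have hd : DifferentiableAt ℝ (fderiv ℝ f) p :=
    ((hf.fderiv_right (m := (⊤ : ℕ∞)) (by simp)).differentiable (by simp)) p
  have key : ∀ c : ℝ × ℝ × ℝ,
      fderiv ℝ (Dv c f) p
        = (ContinuousLinearMap.apply ℝ ℝ c).comp (fderiv ℝ (fderiv ℝ f) p) := by
    intro c
    have h1 : Dv c f = (ContinuousLinearMap.apply ℝ ℝ c) ∘ (fderiv ℝ f) := rfl
    rw [h1, fderiv_comp p (ContinuousLinearMap.apply ℝ ℝ c).differentiableAt hd,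
      ContinuousLinearMap.fderiv]
  have hsymm : IsSymmSndFDerivAt ℝ f p := hf.contDiffAt.isSymmSndFDerivAt (by rw [minSmoothness_of_isRCLikeNormedField]; show ((2 : ℕ∞) : WithTop ℕ∞) ≤ ((⊤ : ℕ∞) : WithTop ℕ∞); exact WithTop.coe_le_coe.mpr le_top)
  calc Dv a (Dv b f) p = fderiv ℝ (fderiv ℝ f) p a b := by
        show fderiv ℝ (Dv b f) p a = _; rw [key b]; rfl
    _ = fderiv ℝ (fderiv ℝ f) p b a := hsymm a b
    _ = Dv b (Dv a f) p := by
        show _ = fderiv ℝ (Dv a f) p b; rw [key a]; rfl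

lemma Dv_add' {f g : ℝ × ℝ × ℝ → ℝ} (hf : ContDiff ℝ (⊤ : ℕ∞) f) (hg : ContDiff ℝ (⊤ : ℕ∞) g)
    (a q : ℝ × ℝ × ℝ) : Dv a (fun x => f x + g x) q = Dv a f q + Dv a g q := by
  simp [Dv, fderiv_fun_add (hf.differentiable (by simp) q) (hg.differentiable (by simp) q)]

lemma Dv_sub' {f g : ℝ × ℝ × ℝ → ℝ} (hf : ContDiff ℝ (⊤ : ℕ∞) f) (hg : ContDiff ℝ (⊤ : ℕ∞) g)
    (a q : ℝ × ℝ × ℝ) : Dv a (fun x => f x - g x) q = Dv a f q - Dv a g q := by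
  simp [Dv, fderiv_fun_sub (hf.differentiable (by simp) q) (hg.differentiable (by simp) q)]

lemma Dv_mul' {f g : ℝ × ℝ × ℝ → ℝ} (hf : ContDiff ℝ (⊤ : ℕ∞) f) (hg : ContDiff ℝ (⊤ : ℕ∞) g)
    (a q : ℝ × ℝ × ℝ) :
    Dv a (fun x => f x * g x) q = Dv a f q * g q + f q * Dv a g q := by
  simp only [Dv, fderiv_fun_mul (hf.differentiable (by simp) q) (hg.differentiable (by simp) q),
    ContinuousLinearMap.add_apply, ContinuousLinearMap.smul_apply, smul_eq_mul]
  ring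

lemma Dv_const_mul' {f : ℝ × ℝ × ℝ → ℝ} (hf : ContDiff ℝ (⊤ : ℕ∞) f) (c : ℝ)
    (a q : ℝ × ℝ × ℝ) : Dv a (fun x => c * f x) q = c * Dv a f q := by
  simp [Dv, fderiv_const_mul (hf.differentiable (by simp) q) c]

lemma Dv_X (a q : ℝ × ℝ × ℝ) : Dv a (fun x : ℝ × ℝ × ℝ => x.2.1) q = a.2.1 := by
  have h : (fun x : ℝ × ℝ × ℝ => x.2.1)
      = ⇑((ContinuousLinearMap.fst ℝ ℝ ℝ).comp (ContinuousLinearMap.snd ℝ ℝ (ℝ × ℝ))) := rfl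
  rw [Dv, h, ContinuousLinearMap.fderiv]
  rfl

lemma contDiff_X : ContDiff ℝ (⊤ : ℕ∞) (fun x : ℝ × ℝ × ℝ => x.2.1) :=
  contDiff_fst.comp contDiff_snd

lemma Dv_xmul' {f : ℝ × ℝ × ℝ → ℝ} (hf : ContDiff ℝ (⊤ : ℕ∞) f) (a q : ℝ × ℝ × ℝ) :
    Dv a (fun x => x.2.1 * f x) q = a.2.1 * f q + q.2.1 * Dv a f q := by
  rw [Dv_mul' contDiff_X hf a q, Dv_X]

lemma pt_eq {f : ℝ × ℝ × ℝ → ℝ} (hf : ContDiff ℝ (⊤ : ℕ∞) f) : pt f = Dv (1,0,0) f := by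
  funext p
  have h1 : HasDerivAt (fun s : ℝ => (s, p.2.1, p.2.2)) ((1:ℝ),(0:ℝ),(0:ℝ)) p.1 :=
    (hasDerivAt_id p.1).prodMk (hasDerivAt_const p.1 (p.2.1, p.2.2))
  have h2 := ((hf.differentiable (by simp) p).hasFDerivAt).comp_hasDerivAt p.1 h1
  exact h2.deriv

lemma px_eq {f : ℝ × ℝ × ℝ → ℝ} (hf : ContDiff ℝ (⊤ : ℕ∞) f) : px f = Dv (0,1,0) f := by
  funext p
  have h1 : HasDerivAt (fun s : ℝ => (p.1, s, p.2.2)) ((0:ℝ),(1:ℝ),(0:ℝ)) p.2.1 :=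
    (hasDerivAt_const p.2.1 p.1).prodMk ((hasDerivAt_id p.2.1).prodMk (hasDerivAt_const p.2.1 p.2.2))
  have h2 := ((hf.differentiable (by simp) p).hasFDerivAt).comp_hasDerivAt p.2.1 h1
  exact h2.deriv

lemma py_eq {f : ℝ × ℝ × ℝ → ℝ} (hf : ContDiff ℝ (⊤ : ℕ∞) f) : py f = Dv (0,0,1) f := by
  funext p
  have h1 : HasDerivAt (fun s : ℝ => (p.1, p.2.1, s)) ((0:ℝ),(0:ℝ),(1:ℝ)) p.2.2 :=
    (hasDerivAt_const p.2.2 p.1).prodMk ((hasDerivAt_const p.2.2 p.2.1).prodMk (hasDerivAt_id p.2.2))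
  have h2 := ((hf.differentiable (by simp) p).hasFDerivAt).comp_hasDerivAt p.2.2 h1
  exact h2.deriv

/-- Derivative of the shape `A·B − 2C + x·D − 2(E·F)`. -/
lemma Dv_shapeA {A B C D E F : ℝ × ℝ × ℝ → ℝ} (hA : ContDiff ℝ (⊤ : ℕ∞) A) (hB : ContDiff ℝ (⊤ : ℕ∞) B)
    (hC : ContDiff ℝ (⊤ : ℕ∞) C) (hD : ContDiff ℝ (⊤ : ℕ∞) D) (hE : ContDiff ℝ (⊤ : ℕ∞) E) (hF : ContDiff ℝ (⊤ : ℕ∞) F)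
    (a q : ℝ × ℝ × ℝ) :
    Dv a (fun x => A x * B x - 2 * C x + x.2.1 * D x - 2 * (E x * F x)) q
      = (Dv a A q * B q + A q * Dv a B q) - 2 * Dv a C q
        + (a.2.1 * D q + q.2.1 * Dv a D q)
        - 2 * (Dv a E q * F q + E q * Dv a F q) := by
  have h1 : Dv a (fun x => A x * B x - 2 * C x + x.2.1 * D x - 2 * (E x * F x)) q
      = Dv a (fun x => A x * B x - 2 * C x + x.2.1 * D x) q
        - Dv a (fun x => 2 * (E x * F x)) q :=
    Dv_sub' (((hA.mul hB).sub (contDiff_const.mul hC)).add (contDiff_X.mul hD))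
      (contDiff_const.mul (hE.mul hF)) a q
  have h2 : Dv a (fun x => A x * B x - 2 * C x + x.2.1 * D x) q
      = Dv a (fun x => A x * B x - 2 * C x) q + Dv a (fun x => x.2.1 * D x) q :=
    Dv_add' ((hA.mul hB).sub (contDiff_const.mul hC)) (contDiff_X.mul hD) a q
  have h3 : Dv a (fun x => A x * B x - 2 * C x) q
      = Dv a (fun x => A x * B x) q - Dv a (fun x => 2 * C x) q :=
    Dv_sub' (hA.mul hB) (contDiff_const.mul hC) a q
  have h4 : Dv a (fun x => A x * B x) q = Dv a A q * B q + A q * Dv a B q := Dv_mul' hA hB a q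
  have h5 : Dv a (fun x => 2 * C x) q = 2 * Dv a C q := Dv_const_mul' hC 2 a q
  have h6 : Dv a (fun x => x.2.1 * D x) q = a.2.1 * D q + q.2.1 * Dv a D q := Dv_xmul' hD a q
  have h7 : Dv a (fun x => 2 * (E x * F x)) q = 2 * Dv a (fun x => E x * F x) q :=
    Dv_const_mul' (hE.mul hF) 2 a q
  have h8 : Dv a (fun x => E x * F x) q = Dv a E q * F q + E q * Dv a F q := Dv_mul' hE hF a q
  rw [h1, h2, h3, h4, h5, h6, h7, h8]

/-- Derivative of the shape `A·B + x·C − 2(D·E)`. -/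
lemma Dv_shapeB {A B C D E : ℝ × ℝ × ℝ → ℝ} (hA : ContDiff ℝ (⊤ : ℕ∞) A) (hB : ContDiff ℝ (⊤ : ℕ∞) B)
    (hC : ContDiff ℝ (⊤ : ℕ∞) C) (hD : ContDiff ℝ (⊤ : ℕ∞) D) (hE : ContDiff ℝ (⊤ : ℕ∞) E)
    (a q : ℝ × ℝ × ℝ) :
    Dv a (fun x => A x * B x + x.2.1 * C x - 2 * (D x * E x)) q
      = (Dv a A q * B q + A q * Dv a B q)
        + (a.2.1 * C q + q.2.1 * Dv a C q)
        - 2 * (Dv a D q * E q + D q * Dv a E q) := by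
  have h1 : Dv a (fun x => A x * B x + x.2.1 * C x - 2 * (D x * E x)) q
      = Dv a (fun x => A x * B x + x.2.1 * C x) q - Dv a (fun x => 2 * (D x * E x)) q :=
    Dv_sub' ((hA.mul hB).add (contDiff_X.mul hC)) (contDiff_const.mul (hD.mul hE)) a q
  have h2 : Dv a (fun x => A x * B x + x.2.1 * C x) q
      = Dv a (fun x => A x * B x) q + Dv a (fun x => x.2.1 * C x) q :=
    Dv_add' (hA.mul hB) (contDiff_X.mul hC) a q
  have h3 : Dv a (fun x => A x * B x) q = Dv a A q * B q + A q * Dv a B q := Dv_mul' hA hB a q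
  have h4 : Dv a (fun x => x.2.1 * C x) q = a.2.1 * C q + q.2.1 * Dv a C q := Dv_xmul' hC a q
  have h5 : Dv a (fun x => 2 * (D x * E x)) q = 2 * Dv a (fun x => D x * E x) q :=
    Dv_const_mul' (hD.mul hE) 2 a q
  have h6 : Dv a (fun x => D x * E x) q = Dv a D q * E q + D q * Dv a E q := Dv_mul' hD hE a q
  rw [h1, h2, h3, h4, h5, h6]

/-- Derivative of the shape `A·B − C·D`. -/
lemma Dv_shapeC {A B C D : ℝ × ℝ × ℝ → ℝ} (hA : ContDiff ℝ (⊤ : ℕ∞) A) (hB : ContDiff ℝ (⊤ : ℕ∞) B)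
    (hC : ContDiff ℝ (⊤ : ℕ∞) C) (hD : ContDiff ℝ (⊤ : ℕ∞) D) (a q : ℝ × ℝ × ℝ) :
    Dv a (fun x => A x * B x - C x * D x) q
      = (Dv a A q * B q + A q * Dv a B q) - (Dv a C q * D q + C q * Dv a D q) := by
  have h1 : Dv a (fun x => A x * B x - C x * D x) q
      = Dv a (fun x => A x * B x) q - Dv a (fun x => C x * D x) q :=
    Dv_sub' (hA.mul hB) (hC.mul hD) a q
  have h2 : Dv a (fun x => A x * B x) q = Dv a A q * B q + A q * Dv a B q := Dv_mul' hA hB a q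
  have h3 : Dv a (fun x => C x * D x) q = Dv a C q * D q + C q * Dv a D q := Dv_mul' hC hD a q
  rw [h1, h2, h3]

/-- `ψ₁ = 3r₁ + x·u_t − 2u·u_x` is a shadow in the negative
covering. -/
theorem shadow_psi_one (u r₁ : ℝ × ℝ × ℝ → ℝ)
    (hu : ContDiff ℝ (⊤ : ℕ∞) u) (hr : ContDiff ℝ (⊤ : ℕ∞) r₁) (heq : rdDym u)
    (hrx : ∀ p, px r₁ p = px u p ^ 2 - pt u p)
    (hry : ∀ p, py r₁ p = px u p * py u p) :
    linearized u (fun p => 3 * r₁ p + p.2.1 * pt u p - 2 * u p * px u p) := by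
  -- projection values of basis directions
  have pe1 : ((1:ℝ),(0:ℝ),(0:ℝ)).2.1 = 0 := rfl
  have pe2 : ((0:ℝ),(1:ℝ),(0:ℝ)).2.1 = 1 := rfl
  have pe3 : ((0:ℝ),(0:ℝ),(1:ℝ)).2.1 = 0 := rfl
  -- smoothness of derivatives
  have hut : ContDiff ℝ (⊤ : ℕ∞) (Dv (1,0,0) u) := Dv_contDiff hu _
  have hux : ContDiff ℝ (⊤ : ℕ∞) (Dv (0,1,0) u) := Dv_contDiff hu _
  have huy : ContDiff ℝ (⊤ : ℕ∞) (Dv (0,0,1) u) := Dv_contDiff hu _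
  have hutx : ContDiff ℝ (⊤ : ℕ∞) (Dv (0,1,0) (Dv (1,0,0) u)) := Dv_contDiff hut _
  have huty : ContDiff ℝ (⊤ : ℕ∞) (Dv (0,0,1) (Dv (1,0,0) u)) := Dv_contDiff hut _
  have huxx : ContDiff ℝ (⊤ : ℕ∞) (Dv (0,1,0) (Dv (0,1,0) u)) := Dv_contDiff hux _
  have huxy : ContDiff ℝ (⊤ : ℕ∞) (Dv (0,0,1) (Dv (0,1,0) u)) := Dv_contDiff hux _
  -- commutation lemmas (second order)
  have c1 : Dv (1,0,0) (Dv (0,1,0) u) = Dv (0,1,0) (Dv (1,0,0) u) := Dv_comm hu _ _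
  have c2 : Dv (1,0,0) (Dv (0,0,1) u) = Dv (0,0,1) (Dv (1,0,0) u) := Dv_comm hu _ _
  have c3 : Dv (0,1,0) (Dv (0,0,1) u) = Dv (0,0,1) (Dv (0,1,0) u) := Dv_comm hu _ _
  -- commutation lemmas (third order), canonical forms:
  -- utxy := Dv (1,0,0) (Dv (0,0,1) (Dv (0,1,0) u)), utxx := Dv (0,1,0) (Dv (0,1,0) (Dv (1,0,0) u))
  -- uxxy := Dv (0,0,1) (Dv (0,1,0) (Dv (0,1,0) u))
  have d1 : Dv (0,0,1) (Dv (0,1,0) (Dv (1,0,0) u))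
      = Dv (1,0,0) (Dv (0,0,1) (Dv (0,1,0) u)) := by
    rw [← c1, Dv_comm hux (0,0,1) (1,0,0)]
  have d2 : Dv (0,1,0) (Dv (0,0,1) (Dv (1,0,0) u))
      = Dv (1,0,0) (Dv (0,0,1) (Dv (0,1,0) u)) := by
    rw [← c2, Dv_comm huy (0,1,0) (1,0,0), c3]
  have d3 : Dv (1,0,0) (Dv (0,1,0) (Dv (0,1,0) u))
      = Dv (0,1,0) (Dv (0,1,0) (Dv (1,0,0) u)) := by
    rw [Dv_comm hux (1,0,0) (0,1,0), c1]
  have d4 : Dv (0,1,0) (Dv (0,0,1) (Dv (0,1,0) u))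
      = Dv (0,0,1) (Dv (0,1,0) (Dv (0,1,0) u)) := Dv_comm hux _ _
  -- hypotheses in Dv form
  have hrx' : Dv (0,1,0) r₁
      = fun q => Dv (0,1,0) u q * Dv (0,1,0) u q - Dv (1,0,0) u q := by
    funext q
    have h := hrx q
    rw [px_eq hr, px_eq hu, pt_eq hu] at h
    rw [h]; ring
  have hry' : Dv (0,0,1) r₁ = fun q => Dv (0,1,0) u q * Dv (0,0,1) u q := by
    funext q
    have h := hry q
    rw [py_eq hr, px_eq hu, py_eq hu] at h
    exact h
  have heq' : Dv (0,0,1) (Dv (1,0,0) u)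
      = fun q => Dv (0,1,0) u q * Dv (0,0,1) (Dv (0,1,0) u) q
          - Dv (0,0,1) u q * Dv (0,1,0) (Dv (0,1,0) u) q := by
    funext q
    have h := heq q
    rw [pt_eq hu, px_eq hu, py_eq hu, py_eq hut, py_eq hux, px_eq hux] at h
    exact h
  -- the shadow function
  set V : ℝ × ℝ × ℝ → ℝ :=
    fun q => 3 * r₁ q + q.2.1 * Dv (1,0,0) u q - 2 * (u q * Dv (0,1,0) u q) with hVdef
  have hV : ContDiff ℝ (⊤ : ℕ∞) V :=
    ((contDiff_const.mul hr).add (contDiff_X.mul hut)).sub (contDiff_const.mul (hu.mul hux))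
  have hveq : (fun p => 3 * r₁ p + p.2.1 * pt u p - 2 * u p * px u p) = V := by
    funext q
    rw [hVdef]
    simp only [pt_eq hu, px_eq hu]
    ring
  rw [hveq]
  -- first derivatives of V
  have hDvV : ∀ a q, Dv a V q
      = 3 * Dv a r₁ q + (a.2.1 * Dv (1,0,0) u q + q.2.1 * Dv a (Dv (1,0,0) u) q)
        - 2 * (Dv a u q * Dv (0,1,0) u q + u q * Dv a (Dv (0,1,0) u) q) := by
    intro a q
    have h1 : Dv a V q = Dv a (fun x => 3 * r₁ x + x.2.1 * Dv (1,0,0) u x) q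
        - Dv a (fun x => 2 * (u x * Dv (0,1,0) u x)) q := by
      rw [hVdef]
      exact Dv_sub' ((contDiff_const.mul hr).add (contDiff_X.mul hut))
        (contDiff_const.mul (hu.mul hux)) a q
    have h2 : Dv a (fun x => 3 * r₁ x + x.2.1 * Dv (1,0,0) u x) q
        = Dv a (fun x => 3 * r₁ x) q + Dv a (fun x => x.2.1 * Dv (1,0,0) u x) q :=
      Dv_add' (contDiff_const.mul hr) (contDiff_X.mul hut) a q
    have h3 : Dv a (fun x => 3 * r₁ x) q = 3 * Dv a r₁ q := Dv_const_mul' hr 3 a q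
    have h4 : Dv a (fun x => x.2.1 * Dv (1,0,0) u x) q
        = a.2.1 * Dv (1,0,0) u q + q.2.1 * Dv a (Dv (1,0,0) u) q := Dv_xmul' hut a q
    have h5 : Dv a (fun x => 2 * (u x * Dv (0,1,0) u x)) q
        = 2 * Dv a (fun x => u x * Dv (0,1,0) u x) q := Dv_const_mul' (hu.mul hux) 2 a q
    have h6 : Dv a (fun x => u x * Dv (0,1,0) u x) q
        = Dv a u q * Dv (0,1,0) u q + u q * Dv a (Dv (0,1,0) u) q := Dv_mul' hu hux a q
    rw [h1, h2, h3, h4, h5, h6]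
  have hVx : Dv (0,1,0) V = fun q => Dv (0,1,0) u q * Dv (0,1,0) u q - 2 * Dv (1,0,0) u q
      + q.2.1 * Dv (0,1,0) (Dv (1,0,0) u) q - 2 * (u q * Dv (0,1,0) (Dv (0,1,0) u) q) := by
    funext q
    have h := hDvV (0,1,0) q
    simp only [hrx', pe2] at h
    rw [h]; ring
  have hVy : Dv (0,0,1) V = fun q => Dv (0,1,0) u q * Dv (0,0,1) u q
      + q.2.1 * Dv (0,0,1) (Dv (1,0,0) u) q - 2 * (u q * Dv (0,0,1) (Dv (0,1,0) u) q) := by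
    funext q
    have h := hDvV (0,0,1) q
    simp only [hry', pe3] at h
    rw [h]; ring
  -- prove the linearized equation pointwise
  refine fun p => ?_
  rw [pt_eq hV, px_eq hV, py_eq hV, px_eq hu, py_eq hu,
    py_eq (Dv_contDiff hV (1,0,0)), py_eq (Dv_contDiff hV (0,1,0)),
    px_eq (Dv_contDiff hV (0,1,0)), py_eq hux, px_eq hux]
  -- second derivatives of V at p
  have hG1 : Dv (0,0,1) (Dv (1,0,0) V) p = Dv (1,0,0) (Dv (0,0,1) V) p :=
    congrFun (Dv_comm hV (0,0,1) (1,0,0)) p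
  have h01 := congrFun (congrArg (Dv (1,0,0)) hVy) p
  rw [Dv_shapeB hux huy huty hu huxy (1,0,0) p] at h01
  simp only [c1, c2, pe1] at h01
  rw [h01] at hG1
  have hG2 := congrFun (congrArg (Dv (0,0,1)) hVx) p
  rw [Dv_shapeA hux hux hut hutx hu huxx (0,0,1) p] at hG2
  simp only [d1, pe3] at hG2
  have hG3 := congrFun (congrArg (Dv (0,1,0)) hVx) p
  rw [Dv_shapeA hux hux hut hutx hu huxx (0,1,0) p] at hG3
  simp only [pe2] at hG3
  have hG4 : Dv (0,1,0) V p = Dv (0,1,0) u p * Dv (0,1,0) u p - 2 * Dv (1,0,0) u p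
      + p.2.1 * Dv (0,1,0) (Dv (1,0,0) u) p - 2 * (u p * Dv (0,1,0) (Dv (0,1,0) u) p) :=
    congrFun hVx p
  have hG5 : Dv (0,0,1) V p = Dv (0,1,0) u p * Dv (0,0,1) u p
      + p.2.1 * Dv (0,0,1) (Dv (1,0,0) u) p - 2 * (u p * Dv (0,0,1) (Dv (0,1,0) u) p) :=
    congrFun hVy p
  -- differentiated rdDym equation
  have hE0 : Dv (0,0,1) (Dv (1,0,0) u) p
      = Dv (0,1,0) u p * Dv (0,0,1) (Dv (0,1,0) u) p
        - Dv (0,0,1) u p * Dv (0,1,0) (Dv (0,1,0) u) p := congrFun heq' p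
  have hE1 := congrFun (congrArg (Dv (1,0,0)) heq') p
  rw [Dv_shapeC hux huxy huy huxx (1,0,0) p] at hE1
  simp only [c1, c2, d3] at hE1
  have hE2 := congrFun (congrArg (Dv (0,1,0)) heq') p
  rw [Dv_shapeC hux huxy huy huxx (0,1,0) p] at hE2
  simp only [d2, d4, c3] at hE2
  rw [hG1, hG2, hG3, hG4, hG5]
  linear_combination 3 * Dv (0,1,0) u p * hE0 + p.2.1 * hE1 - 2 * u p * hE2
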